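/- Let ρ be a density matrix on H ⊗ H. If the SWAP test on ρ accepts with probability 1, i.e., Tr(((I+S)/2) ρ) = 1, then the two reduced states of ρ are equal: Tr_2(ρ) = Tr_1(ρ). -/

import Mathlib

open Finset
open scoped ComplexOrder

noncomputable section

/-- The swap matrix on `H ⊗ H`. -/
def swapMatrix (ι : Type*) [Fintype ι] [DecidableEq ι] : Matrix (ι × ι) (ι × ι) ℂ :=
  Matrix.of fun p q => if p.1 = q.2 ∧ p.2 = q.1 then 1 else 0

/-- Partial trace over the first tensor factor. -/
def ptraceFst {ι κ : Type*} [Fintype ι] (M : Matrix (ι × κ) (ι × κ) ℂ) : Matrix κ κ ℂ :=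
  Matrix.of fun j j' => ∑ i, M (i, j) (i, j')

/-- Partial trace over the second tensor factor. -/
def ptraceSnd {ι κ : Type*} [Fintype κ] (M : Matrix (ι × κ) (ι × κ) ℂ) : Matrix ι ι ℂ :=
  Matrix.of fun i i' => ∑ j, M (i, j) (i', j)

/-- The outer product `|ψ⟩⟨φ|`. -/
def outer {n : Type*} (ψ φ : n → ℂ) : Matrix n n ℂ :=
  Matrix.of fun p q => ψ p * star (φ q)

/-- The trace norm `‖A‖_tr = Tr √(AᴴA)`. -/
def traceNorm {n : Type*} [Fintype n] [DecidableEq n] (A : Matrix n n ℂ) : ℝ :=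
  (((Matrix.posSemidef_conjTranspose_mul_self A).1.eigenvectorUnitary.1 *
      Matrix.diagonal (((↑) : ℝ → ℂ) ∘ Real.sqrt ∘ (Matrix.posSemidef_conjTranspose_mul_self A).1.eigenvalues) *
      (star (Matrix.posSemidef_conjTranspose_mul_self A).1.eigenvectorUnitary : Matrix n n ℂ)).trace).re

/-- The trace distance between two states. -/
def traceDist {n : Type*} [Fintype n] [DecidableEq n] (ρ σ : Matrix n n ℂ) : ℝ :=
  (1 / 2) * traceNorm (ρ - σ)

/-! Acceptance with probability 1 means `Tr (S ρ) = Tr ρ`. Then `(1 - S) ρ (1 - S)` is positive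
semidefinite with trace `Tr (ρ (1 - S)²) = 2 Tr (ρ (1 - S)) = 0`, so it vanishes, and writing
`ρ = Cᴴ C` this forces `ρ (1 - S) = 0`. Hence `S ρ = ρ = ρ S`, and conjugation by `S` exchanges
the two partial traces. -/

open scoped MatrixOrder

namespace Matrix.PosSemidef

variable {𝕜 m n : Type*} [RCLike 𝕜] [Fintype n]

theorem mul_eq_zero_of_conjTranspose_mul_mul_eq_zero {A : Matrix n n 𝕜} (hA : A.PosSemidef)
    {B : Matrix n m 𝕜} (h : Bᴴ * A * B = 0) : A * B = 0 := by
  classical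
  obtain ⟨C, rfl⟩ := CStarAlgebra.nonneg_iff_eq_star_mul_self.mp hA.nonneg
  have hCB : (C * B)ᴴ * (C * B) = 0 := by
    simpa only [conjTranspose_mul, star_eq_conjTranspose, Matrix.mul_assoc] using h
  rw [Matrix.mul_assoc, conjTranspose_mul_self_eq_zero.mp hCB, Matrix.mul_zero]

theorem mul_eq_self_of_trace_mul_eq_trace [DecidableEq n] {A S : Matrix n n 𝕜}
    (hA : A.PosSemidef) (hS : S.IsHermitian) (hSS : S * S = 1)
    (h : (S * A).trace = A.trace) : A * S = A := by
  have hsq : (1 - S) * (1 - S) = (2 : 𝕜) • (1 - S) := by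
    rw [Matrix.sub_mul, Matrix.one_mul, Matrix.mul_sub, Matrix.mul_one, hSS]
    module
  have hzero : (1 - S)ᴴ * A * (1 - S) = 0 := by
    refine (hA.conjTranspose_mul_mul_same (1 - S)).trace_eq_zero_iff.mp ?_
    rw [trace_mul_comm, ← Matrix.mul_assoc, conjTranspose_sub, conjTranspose_one, hS.eq, hsq,
      Matrix.smul_mul, trace_smul, Matrix.sub_mul, trace_sub, Matrix.one_mul, h, sub_self,
      smul_zero]
  have := hA.mul_eq_zero_of_conjTranspose_mul_mul_eq_zero hzero
  rwa [Matrix.mul_sub, Matrix.mul_one, sub_eq_zero, eq_comm] at this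

end Matrix.PosSemidef

section Swap

variable {ι : Type*} [Fintype ι] [DecidableEq ι]

theorem swapMatrix_mul_apply (M : Matrix (ι × ι) (ι × ι) ℂ) (p q : ι × ι) :
    (swapMatrix ι * M) p q = M p.swap q := by
  have hmem (r : ι × ι) : (p.1 = r.2 ∧ p.2 = r.1) ↔ p.swap = r := by
    rw [Prod.ext_iff, and_comm, Prod.fst_swap, Prod.snd_swap]
  simp [Matrix.mul_apply, swapMatrix, hmem]

theorem mul_swapMatrix_apply (M : Matrix (ι × ι) (ι × ι) ℂ) (p q : ι × ι) :
    (M * swapMatrix ι) p q = M p q.swap := by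
  have hmem (r : ι × ι) : (r.1 = q.2 ∧ r.2 = q.1) ↔ r = q.swap := by
    rw [Prod.ext_iff, Prod.fst_swap, Prod.snd_swap]
  simp [Matrix.mul_apply, swapMatrix, hmem]

theorem isHermitian_swapMatrix : (swapMatrix ι).IsHermitian := by
  ext p q
  simp [swapMatrix, eq_comm, and_comm]

theorem swapMatrix_mul_self : swapMatrix ι * swapMatrix ι = 1 := by
  ext p q
  rw [swapMatrix_mul_apply]
  simp [swapMatrix, Matrix.one_apply, Prod.ext_iff, and_comm]

theorem ptraceFst_swapMatrix_mul_mul_swapMatrix (M : Matrix (ι × ι) (ι × ι) ℂ) :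
    ptraceFst (swapMatrix ι * M * swapMatrix ι) = ptraceSnd M := by
  ext j j'
  simp [ptraceFst, ptraceSnd, mul_swapMatrix_apply, swapMatrix_mul_apply]

end Swap

/-- If the SWAP test on a density matrix `ρ` accepts with probability 1,
then the two reduced states of `ρ` are equal. -/
theorem stmt_7 {ι : Type*} [Fintype ι] [DecidableEq ι] (ρ : Matrix (ι × ι) (ι × ι) ℂ)
    (hρ : ρ.PosSemidef) (htr : ρ.trace = 1)
    (hacc : (((2 : ℂ)⁻¹ • (1 + swapMatrix ι)) * ρ).trace = 1) :
    ptraceSnd ρ = ptraceFst ρ := by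
  have hS := isHermitian_swapMatrix (ι := ι)
  have hSρ_tr : (swapMatrix ι * ρ).trace = ρ.trace := by
    rw [Matrix.smul_mul, Matrix.trace_smul, Matrix.add_mul, Matrix.trace_add, Matrix.one_mul, htr,
      smul_eq_mul] at hacc
    linear_combination (2 : ℂ) * hacc - htr
  have hρS : ρ * swapMatrix ι = ρ :=
    hρ.mul_eq_self_of_trace_mul_eq_trace hS swapMatrix_mul_self hSρ_tr
  have hSρ : swapMatrix ι * ρ = ρ := by
    simpa only [Matrix.conjTranspose_mul, hS.eq, hρ.isHermitian.eq] using
      congrArg Matrix.conjTranspose hρS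
  rw [← ptraceFst_swapMatrix_mul_mul_swapMatrix, hSρ, hρS]

end
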